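/- arXiv:2009.14726 — 4 statements merged into one kernel-verified Lean document; each statement's English description precedes it below -/
import Mathlib

section
/- Consider the directed mixed-integer reformulation constraints for a pipe with y ∈ {0,1}, f ∈ [f_lo, f_hi] (f_lo ≤ 0 ≤ f_hi), π_i ∈ [π_i^lo, π_i^hi], π_j ∈ [π_j^lo, π_j^hi], and w > 0: (a) π_i - π_j ≥ w·f² - (1-y)[w·f_lo² - (π_i^lo - π_j^hi)], (b) π_i - π_j ≤ w·f², (c) π_j - π_i ≥ w·f² - y[w·f_hi² - (π_j^lo - π_i^hi)], (d) π_j - π_i ≤ w·f², together with (1-y)f_lo ≤ f ≤ y·f_hi. Then any feasible point satisfies π_i - π_j = w·f·|f|. -/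
/-! The binary `y` fixes the flow direction through `(1 - y) f_lo ≤ f ≤ y f_hi`. For `y = 1` the
big-M term in (a) vanishes, so (a) and (b) squeeze `π_i - π_j = w f²` with `f ≥ 0`; for `y = 0`
the same happens to (c) and (d), giving `π_j - π_i = w f²` with `f ≤ 0`. In both cases the
right-hand side is `w f |f|`. -/

theorem eq_mul_mul_abs_of_nonneg {Δ w f : ℝ} (hf : 0 ≤ f) (hΔ : Δ = w * f ^ 2) :
    Δ = w * f * |f| := by
  rw [abs_of_nonneg hf]
  linear_combination hΔ

theorem eq_mul_mul_abs_of_nonpos {Δ w f : ℝ} (hf : f ≤ 0) (hΔ : -Δ = w * f ^ 2) :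
    Δ = w * f * |f| := by
  rw [abs_of_nonpos hf]
  linear_combination -hΔ

theorem stmt_11_general (w f f_lo f_hi y π_i π_j πil πih πjl πjh : ℝ)
    (hy : y = 0 ∨ y = 1)
    (ha : π_i - π_j ≥ w * f ^ 2 - (1 - y) * (w * f_lo ^ 2 - (πil - πjh)))
    (hb : π_i - π_j ≤ w * f ^ 2)
    (hc : π_j - π_i ≥ w * f ^ 2 - y * (w * f_hi ^ 2 - (πjl - πih)))
    (hd : π_j - π_i ≤ w * f ^ 2)
    (hdir1 : (1 - y) * f_lo ≤ f) (hdir2 : f ≤ y * f_hi) :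
    π_i - π_j = w * f * |f| := by
  rcases hy with rfl | rfl
  · have hf : f ≤ 0 := by simpa using hdir2
    have hc' : w * f ^ 2 ≤ π_j - π_i := by simpa using hc
    exact eq_mul_mul_abs_of_nonpos hf (by rw [neg_sub]; exact le_antisymm hd hc')
  · have hf : 0 ≤ f := by simpa using hdir1
    have ha' : w * f ^ 2 ≤ π_i - π_j := by simpa using ha
    exact eq_mul_mul_abs_of_nonneg hf (le_antisymm hb ha')

/-- Exactness of the MINQP big-M reformulation of the Weymouth equation. -/
theorem stmt_11 (w f f_lo f_hi y π_i π_j πil πih πjl πjh : ℝ)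
    (hw : 0 < w) (hy : y = 0 ∨ y = 1)
    (hflo : f_lo ≤ 0) (hfhi : 0 ≤ f_hi)
    (hπi : πil ≤ π_i) (hπi' : π_i ≤ πih) (hπj : πjl ≤ π_j) (hπj' : π_j ≤ πjh)
    (hM1 : πil - πjh ≤ w * f_lo ^ 2) (hM2 : πjl - πih ≤ w * f_hi ^ 2)
    (ha : π_i - π_j ≥ w * f ^ 2 - (1 - y) * (w * f_lo ^ 2 - (πil - πjh)))
    (hb : π_i - π_j ≤ w * f ^ 2)
    (hc : π_j - π_i ≥ w * f ^ 2 - y * (w * f_hi ^ 2 - (πjl - πih)))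
    (hd : π_j - π_i ≤ w * f ^ 2)
    (hdir1 : (1 - y) * f_lo ≤ f) (hdir2 : f ≤ y * f_hi) :
    π_i - π_j = w * f * |f| :=
  stmt_11_general w f f_lo f_hi y π_i π_j πil πih πjl πjh hy ha hb hc hd hdir1 hdir2
end

section
/- Suppose at a junction i with zero supply and zero demand, mass conservation holds: the sum of flows on outgoing arcs minus the sum of flows on incoming arcs equals zero. If the junction has exactly one incoming arc (j,i) and one outgoing arc (i,k), and flow directions y satisfy (1-y)f_lo ≤ f ≤ y·f_hi with f_lo < 0 < f_hi on each arc, and both flows are nonzero, then y_{ji} = y_{ik}. -/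
section DirectionVariable

variable {R : Type*} [Ring R] [LinearOrder R] [IsStrictOrderedRing R]

/-- `y = 0` forces `f ≤ 0` and `y = 1` forces `0 ≤ f`. -/
theorem direction_eq_one_iff_pos {f y lo hi : R} (hy : y = 0 ∨ y = 1)
    (hlo : (1 - y) * lo ≤ f) (hhi : f ≤ y * hi) (hf : f ≠ 0) : y = 1 ↔ 0 < f := by
  rcases hy with rfl | rfl
  · simp only [zero_ne_one, false_iff, not_lt]
    simpa using hhi
  · simp only [sub_self, zero_mul] at hlo
    exact iff_of_true rfl (lt_of_le_of_ne hlo hf.symm)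

theorem eq_of_binary_of_eq_one_iff {a b : R} (ha : a = 0 ∨ a = 1) (hb : b = 0 ∨ b = 1)
    (h : a = 1 ↔ b = 1) : a = b := by
  rcases ha with rfl | rfl <;> rcases hb with rfl | rfl <;> simp_all

end DirectionVariable

theorem stmt_14_general (f_ji f_ik y_ji y_ik flo_ji fhi_ji flo_ik fhi_ik : ℝ)
    (hcons : f_ik - f_ji = 0)
    (hy1 : y_ji = 0 ∨ y_ji = 1) (hy2 : y_ik = 0 ∨ y_ik = 1)
    (hd1 : (1 - y_ji) * flo_ji ≤ f_ji) (hd1' : f_ji ≤ y_ji * fhi_ji)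
    (hd2 : (1 - y_ik) * flo_ik ≤ f_ik) (hd2' : f_ik ≤ y_ik * fhi_ik)
    (hnz1 : f_ji ≠ 0) :
    y_ji = y_ik := by
  have hflow : f_ik = f_ji := sub_eq_zero.mp hcons
  rw [hflow] at hd2 hd2'
  exact eq_of_binary_of_eq_one_iff hy1 hy2
    ((direction_eq_one_iff_pos hy1 hd1 hd1' hnz1).trans
      (direction_eq_one_iff_pos hy2 hd2 hd2' hnz1).symm)

/-- Degree-two direction cut: at a transshipment junction with one incoming and one
outgoing arc, nonzero flows force equal direction variables. -/
theorem stmt_14 (f_ji f_ik y_ji y_ik flo_ji fhi_ji flo_ik fhi_ik : ℝ)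
    (hcons : f_ik - f_ji = 0)
    (hy1 : y_ji = 0 ∨ y_ji = 1) (hy2 : y_ik = 0 ∨ y_ik = 1)
    (hlo1 : flo_ji < 0) (hhi1 : 0 < fhi_ji)
    (hlo2 : flo_ik < 0) (hhi2 : 0 < fhi_ik)
    (hd1 : (1 - y_ji) * flo_ji ≤ f_ji) (hd1' : f_ji ≤ y_ji * fhi_ji)
    (hd2 : (1 - y_ik) * flo_ik ≤ f_ik) (hd2' : f_ik ≤ y_ik * fhi_ik)
    (hnz1 : f_ji ≠ 0) (hnz2 : f_ik ≠ 0) :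
    y_ji = y_ik :=
  stmt_14_general f_ji f_ik y_ji y_ik flo_ji fhi_ji flo_ik fhi_ik hcons hy1 hy2 hd1 hd1' hd2 hd2'
    hnz1
end

section
/- Suppose at a junction i with zero supply and zero demand, mass conservation holds, and i has exactly two incident arcs, both incoming: (j,i) and (k,i), with direction variables constrained by (1-y)f_lo ≤ f ≤ y·f_hi, f_lo < 0 < f_hi. If both flows are nonzero, then exactly one of y_{ji}, y_{ki} equals 1, i.e., y_{ji} + y_{ki} = 1. -/
lemma flow_neg_of_direction_eq_zero {f y hi : ℝ} (hy : y = 0) (hup : f ≤ y * hi) (hf : f ≠ 0) :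
    f < 0 := by
  subst hy
  exact lt_of_le_of_ne (by simpa using hup) hf

lemma flow_pos_of_direction_eq_one {f y lo : ℝ} (hy : y = 1) (hlow : (1 - y) * lo ≤ f)
    (hf : f ≠ 0) : 0 < f := by
  subst hy
  exact lt_of_le_of_ne (by simpa using hlow) hf.symm

theorem stmt_15_general (f_ji f_ki y_ji y_ki flo_ji fhi_ji flo_ki fhi_ki : ℝ)
    (hcons : f_ji + f_ki = 0)
    (hy1 : y_ji = 0 ∨ y_ji = 1) (hy2 : y_ki = 0 ∨ y_ki = 1)
    (hd1 : (1 - y_ji) * flo_ji ≤ f_ji) (hd1' : f_ji ≤ y_ji * fhi_ji)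
    (hd2 : (1 - y_ki) * flo_ki ≤ f_ki) (hd2' : f_ki ≤ y_ki * fhi_ki)
    (hnz1 : f_ji ≠ 0) (hnz2 : f_ki ≠ 0) :
    y_ji + y_ki = 1 := by
  rcases hy1 with h1 | h1 <;> rcases hy2 with h2 | h2
  · linarith [flow_neg_of_direction_eq_zero h1 hd1' hnz1,
      flow_neg_of_direction_eq_zero h2 hd2' hnz2]
  · rw [h1, h2]; norm_num
  · rw [h1, h2]; norm_num
  · linarith [flow_pos_of_direction_eq_one h1 hd1 hnz1,
      flow_pos_of_direction_eq_one h2 hd2 hnz2]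

/-- Degree-two direction cut, both-incoming case: conservation with nonzero flows
forces the two binary direction variables to sum to one. -/
theorem stmt_15 (f_ji f_ki y_ji y_ki flo_ji fhi_ji flo_ki fhi_ki : ℝ)
    (hcons : f_ji + f_ki = 0)
    (hy1 : y_ji = 0 ∨ y_ji = 1) (hy2 : y_ki = 0 ∨ y_ki = 1)
    (hlo1 : flo_ji < 0) (hhi1 : 0 < fhi_ji)
    (hlo2 : flo_ki < 0) (hhi2 : 0 < fhi_ki)
    (hd1 : (1 - y_ji) * flo_ji ≤ f_ji) (hd1' : f_ji ≤ y_ji * fhi_ji)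
    (hd2 : (1 - y_ki) * flo_ki ≤ f_ki) (hd2' : f_ki ≤ y_ki * fhi_ki)
    (hnz1 : f_ji ≠ 0) (hnz2 : f_ki ≠ 0) :
    y_ji + y_ki = 1 :=
  stmt_15_general f_ji f_ki y_ji y_ki flo_ji fhi_ji flo_ki fhi_ki hcons hy1 hy2 hd1 hd1' hd2 hd2'
    hnz1 hnz2
end

section
/- Let g : [0, F] → ℝ be g(f) = w·f·|f| = w·f² (with w > 0), and let C = {(f, ℓ) : w·f² ≤ ℓ ≤ w·F·f, 0 ≤ f ≤ F}. Then C is convex, C contains the graph of g on [0, F], and C equals the convex hull of the graph {(f, w·f²) : f ∈ [0, F]}. -/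
/-!
A point `(x, y)` lying between the graph of a convex function `g` on `[a, b]` and the chord
joining its endpoints is on the vertical segment from `(x, g x)` to the chord point above `x`,
which is itself a convex combination of `(a, g a)` and `(b, g b)`; conversely the region is
convex and contains the graph, since `g` lies below its chord. For `g x = w x²` on `[0, F]`
the chord is `ℓ = w F f`.
-/

open Set

/-- The chord condition is written without division, so that it is affine in `p`. -/
def chordRegion (g : ℝ → ℝ) (a b : ℝ) : Set (ℝ × ℝ) :=
  {p | p.1 ∈ Icc a b ∧ g p.1 ≤ p.2 ∧ (b - a) * p.2 ≤ (b - p.1) * g a + (p.1 - a) * g b}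

section ChordRegion

variable {g : ℝ → ℝ} {a b : ℝ}

theorem convex_setOf_le_chord (g : ℝ → ℝ) (a b : ℝ) :
    Convex ℝ {p : ℝ × ℝ | (b - a) * p.2 ≤ (b - p.1) * g a + (p.1 - a) * g b} := by
  rintro ⟨x, y⟩ hp ⟨x', y'⟩ hq s t hs ht hst
  simp only [mem_ofPred_eq, Prod.smul_mk, Prod.mk_add_mk, smul_eq_mul] at hp hq ⊢
  linear_combination s * hp + t * hq + (b * g a - a * g b) * hst

theorem ConvexOn.convex_chordRegion (hg : ConvexOn ℝ (Icc a b) g) :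
    Convex ℝ (chordRegion g a b) := by
  have h := hg.convex_epigraph.inter (convex_setOf_le_chord g a b)
  simpa only [chordRegion, inter_def, mem_ofPred_eq, and_assoc] using h

theorem ConvexOn.le_chord (hg : ConvexOn ℝ (Icc a b) g) (hab : a < b) {x : ℝ}
    (hx : x ∈ Icc a b) : (b - a) * g x ≤ (b - x) * g a + (x - a) * g b := by
  have hba : 0 < b - a := sub_pos.mpr hab
  have hcomb : (b - x) / (b - a) * a + (x - a) / (b - a) * b = x := by
    field_simp; ring
  have h := hg.2 (left_mem_Icc.mpr hab.le) (right_mem_Icc.mpr hab.le)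
    (div_nonneg (sub_nonneg.mpr hx.2) hba.le) (div_nonneg (sub_nonneg.mpr hx.1) hba.le)
    (by field_simp; ring)
  simp only [smul_eq_mul, hcomb] at h
  calc (b - a) * g x
      ≤ (b - a) * ((b - x) / (b - a) * g a + (x - a) / (b - a) * g b) :=
        mul_le_mul_of_nonneg_left h hba.le
    _ = (b - x) * g a + (x - a) * g b := by field_simp

theorem ConvexOn.image_graph_subset_chordRegion (hg : ConvexOn ℝ (Icc a b) g) (hab : a < b) :
    (fun x => (x, g x)) '' Icc a b ⊆ chordRegion g a b := by
  rintro _ ⟨x, hx, rfl⟩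
  exact ⟨hx, le_rfl, hg.le_chord hab hx⟩

theorem mk_chord_mem_segment (hab : a < b) {x : ℝ} (hx : x ∈ Icc a b) :
    (x, ((b - x) * g a + (x - a) * g b) / (b - a)) ∈ segment ℝ (a, g a) (b, g b) := by
  have hba : 0 < b - a := sub_pos.mpr hab
  have hba' : b - a ≠ 0 := hba.ne'
  refine ⟨(b - x) / (b - a), (x - a) / (b - a), div_nonneg (sub_nonneg.mpr hx.2) hba.le,
    div_nonneg (sub_nonneg.mpr hx.1) hba.le, by field_simp; ring, ?_⟩
  simp only [Prod.smul_mk, Prod.mk_add_mk, smul_eq_mul, Prod.mk.injEq]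
  constructor
  · field_simp; ring
  · field_simp

theorem chordRegion_subset_convexHull (hab : a < b) :
    chordRegion g a b ⊆ convexHull ℝ ((fun x => (x, g x)) '' Icc a b) := by
  rintro ⟨x, y⟩ ⟨hx, hy_graph, hy_chord⟩
  set c := ((b - x) * g a + (x - a) * g b) / (b - a)
  have hba : 0 < b - a := sub_pos.mpr hab
  have hyc : y ≤ c := by rw [le_div_iff₀ hba, mul_comm]; exact hy_chord
  have hhull := convex_convexHull ℝ ((fun x => (x, g x)) '' Icc a b)
  have hgraph : ∀ z ∈ Icc a b, (z, g z) ∈ convexHull ℝ ((fun x => (x, g x)) '' Icc a b) :=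
    fun z hz => subset_convexHull ℝ _ ⟨z, hz, rfl⟩
  have hc : (x, c) ∈ convexHull ℝ ((fun x => (x, g x)) '' Icc a b) :=
    hhull.segment_subset (hgraph a (left_mem_Icc.mpr hab.le)) (hgraph b (right_mem_Icc.mpr hab.le))
      (mk_chord_mem_segment hab hx)
  apply hhull.segment_subset (hgraph x hx) hc
  rw [← Prod.image_mk_segment_right, segment_eq_Icc (hy_graph.trans hyc)]
  exact ⟨y, ⟨hy_graph, hyc⟩, rfl⟩

theorem ConvexOn.convexHull_image_graph (hg : ConvexOn ℝ (Icc a b) g) (hab : a < b) :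
    convexHull ℝ ((fun x => (x, g x)) '' Icc a b) = chordRegion g a b :=
  (convexHull_min (hg.image_graph_subset_chordRegion hab) hg.convex_chordRegion).antisymm
    (chordRegion_subset_convexHull hab)

end ChordRegion

theorem convexOn_const_mul_sq {w : ℝ} (hw : 0 ≤ w) (s : Set ℝ) (hs : Convex ℝ s) :
    ConvexOn ℝ s (fun x => w * x ^ 2) :=
  ((even_two.convexOn_pow).smul hw).subset (subset_univ s) hs

theorem chordRegion_const_mul_sq {w F : ℝ} (hF : 0 < F) :
    chordRegion (fun x => w * x ^ 2) 0 F =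
      {q : ℝ × ℝ | 0 ≤ q.1 ∧ q.1 ≤ F ∧ w * q.1 ^ 2 ≤ q.2 ∧ q.2 ≤ w * F * q.1} := by
  ext ⟨f, l⟩
  have hchord : (F - 0) * l ≤ (F - f) * (w * 0 ^ 2) + (f - 0) * (w * F ^ 2) ↔ l ≤ w * F * f := by
    rw [show (F - f) * (w * 0 ^ 2) + (f - 0) * (w * F ^ 2) = (F - 0) * (w * F * f) by ring]
    exact mul_le_mul_iff_right₀ (by simpa using hF)
  simp only [chordRegion, mem_Icc, mem_ofPred_eq, hchord, and_assoc]

/-- The region between the parabola `ℓ = w·f²` and its chord on `[0, F]` is convex,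
contains the graph of `f ↦ w·f²`, and equals the convex hull of that graph. -/
theorem stmt_19 (w F : ℝ) (hw : 0 < w) (hF : 0 < F) :
    Convex ℝ {q : ℝ × ℝ | 0 ≤ q.1 ∧ q.1 ≤ F ∧
      w * q.1 ^ 2 ≤ q.2 ∧ q.2 ≤ w * F * q.1} ∧
    ({q : ℝ × ℝ | ∃ f ∈ Set.Icc 0 F, q = (f, w * f ^ 2)} ⊆
      {q : ℝ × ℝ | 0 ≤ q.1 ∧ q.1 ≤ F ∧ w * q.1 ^ 2 ≤ q.2 ∧ q.2 ≤ w * F * q.1}) ∧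
    {q : ℝ × ℝ | 0 ≤ q.1 ∧ q.1 ≤ F ∧ w * q.1 ^ 2 ≤ q.2 ∧ q.2 ≤ w * F * q.1} =
      convexHull ℝ {q : ℝ × ℝ | ∃ f ∈ Set.Icc 0 F, q = (f, w * f ^ 2)} := by
  have hgraph : {q : ℝ × ℝ | ∃ f ∈ Set.Icc 0 F, q = (f, w * f ^ 2)} =
      (fun x => (x, w * x ^ 2)) '' Icc 0 F := by
    ext q
    simp only [mem_ofPred_eq, mem_image, eq_comm]
  have hhull := (convexOn_const_mul_sq hw.le _ (convex_Icc 0 F)).convexHull_image_graph hF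
  rw [chordRegion_const_mul_sq hF, ← hgraph] at hhull
  rw [← hhull]
  exact ⟨convex_convexHull ℝ _, subset_convexHull ℝ _, rfl⟩
end
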